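/- Let |ψ⟩ ∈ H_A ⊗ H_B ⊗ H_C be a unit vector, M_A and M_B contractions on H_A and H_B, with p_A = ‖(M_A⊗I⊗I)ψ‖² > 0 and p_AB = ‖(M_A⊗M_B⊗I)ψ‖² > 0. Let ψ'_A and ψ'_AB be the corresponding normalized post-measurement states. Then the min-entropy of the A-marginal satisfies H_∞(A)_{ψ'_AB} ≥ H_∞(A)_{ψ'_A} − log₂(p_A/p_AB). -/

import Mathlib

open Matrix

/-- Application of `M_A ⊗ I ⊗ I` to the coefficient tensor of a tripartite vector. -/
noncomputable def applyA {dA dB dC : ℕ} (M : Matrix (Fin dA) (Fin dA) ℂ)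
    (ψ : Fin dA × Fin dB × Fin dC → ℂ) : Fin dA × Fin dB × Fin dC → ℂ :=
  fun x => ∑ i' : Fin dA, M x.1 i' * ψ (i', x.2.1, x.2.2)

/-- Application of `I ⊗ M_B ⊗ I` to the coefficient tensor of a tripartite vector. -/
noncomputable def applyB {dA dB dC : ℕ} (M : Matrix (Fin dB) (Fin dB) ℂ)
    (ψ : Fin dA × Fin dB × Fin dC → ℂ) : Fin dA × Fin dB × Fin dC → ℂ :=
  fun x => ∑ j' : Fin dB, M x.2.1 j' * ψ (x.1, j', x.2.2)

/-- The reduced state on `A` of a tripartite vector. -/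
noncomputable def trBCmat {dA dB dC : ℕ} (w : Fin dA × Fin dB × Fin dC → ℂ) :
    Matrix (Fin dA) (Fin dA) ℂ :=
  Matrix.of fun i i' => ∑ j : Fin dB, ∑ k : Fin dC, w (i, j, k) * (starRingEnd ℂ) (w (i', j, k))

/-- The min-entropy of the `A`-marginal of a tripartite vector. -/
noncomputable def minEntropyA {dA dB dC : ℕ} (w : Fin dA × Fin dB × Fin dC → ℂ) : ℝ :=
  -Real.logb 2 ‖Matrix.toEuclideanCLM (𝕜 := ℂ) (trBCmat w)‖

/-! Cut `w` into the `A × B` slices `Sₖ` indexed by the `C` coordinate: the reduced state is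
`∑ₖ Sₖ Sₖᴴ`, and `M_B` acts by `Sₖ ↦ Sₖ M_Bᵀ`. As `M_Bᵀ M_Bᵀᴴ ≤ 1` for a contraction, applying
`M_B` can only decrease the reduced state in the Loewner order, hence its operator norm (the norm
is monotone on positive elements of a C⋆-algebra). Since `M_A` and `M_B` act on different
factors, this compares the unnormalized `A`-marginals of the two truncated states, and
normalizing by `p` shifts the min-entropy by exactly `log₂ p`. -/

open scoped MatrixOrder ComplexOrder Matrix.Norms.L2Operator

namespace Matrix

variable {m n : Type*} [Fintype n]

lemma conjTranspose_mul_self_le_one [DecidableEq n] {M : Matrix n n ℂ}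
    (hM : ‖toEuclideanCLM (𝕜 := ℂ) M‖ ≤ 1) : Mᴴ * M ≤ 1 := by
  rw [← CStarAlgebra.norm_le_one_iff_of_nonneg _ (posSemidef_conjTranspose_mul_self M).nonneg,
    ← star_eq_conjTranspose, CStarRing.norm_star_mul_self]
  exact mul_le_one₀ hM (norm_nonneg _) hM

lemma mul_mul_conjTranspose_mono [Fintype m] {A B : Matrix n n ℂ} (hAB : A ≤ B)
    (S : Matrix m n ℂ) : S * A * Sᴴ ≤ S * B * Sᴴ := by
  rw [le_iff, ← Matrix.sub_mul, ← Matrix.mul_sub]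
  exact (le_iff.mp hAB).mul_mul_conjTranspose_same S

lemma norm_toEuclideanCLM_le_of_le [DecidableEq n] {A B : Matrix n n ℂ} (hA : A.PosSemidef)
    (hAB : A ≤ B) : ‖toEuclideanCLM (𝕜 := ℂ) A‖ ≤ ‖toEuclideanCLM (𝕜 := ℂ) B‖ :=
  show ‖A‖ ≤ ‖B‖ from CStarAlgebra.norm_le_norm_of_nonneg_of_le hA.nonneg hAB

end Matrix

open Matrix ComplexConjugate

variable {dA dB dC : ℕ}

lemma applyA_applyB_comm (MA : Matrix (Fin dA) (Fin dA) ℂ) (MB : Matrix (Fin dB) (Fin dB) ℂ)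
    (ψ : Fin dA × Fin dB × Fin dC → ℂ) :
    applyA MA (applyB MB ψ) = applyB MB (applyA MA ψ) := by
  funext x
  simp only [applyA, applyB, Finset.mul_sum]
  rw [Finset.sum_comm]
  exact Finset.sum_congr rfl fun j _ => Finset.sum_congr rfl fun i _ => by ring

def sliceC (w : Fin dA × Fin dB × Fin dC → ℂ) (k : Fin dC) : Matrix (Fin dA) (Fin dB) ℂ :=
  of fun i j => w (i, j, k)

lemma trBCmat_eq_sum_sliceC (w : Fin dA × Fin dB × Fin dC → ℂ) :
    trBCmat w = ∑ k, sliceC w k * (sliceC w k)ᴴ := by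
  ext i i'
  simp only [trBCmat, sliceC, of_apply, Matrix.sum_apply, mul_apply, conjTranspose_apply,
    RCLike.star_def]
  exact Finset.sum_comm

lemma sliceC_applyB (M : Matrix (Fin dB) (Fin dB) ℂ) (w : Fin dA × Fin dB × Fin dC → ℂ)
    (k : Fin dC) : sliceC (applyB M w) k = sliceC w k * Mᵀ := by
  ext i j
  simp only [sliceC, applyB, of_apply, mul_apply, transpose_apply]
  exact Finset.sum_congr rfl fun j' _ => mul_comm _ _

lemma posSemidef_trBCmat (w : Fin dA × Fin dB × Fin dC → ℂ) : (trBCmat w).PosSemidef := by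
  rw [trBCmat_eq_sum_sliceC]
  exact posSemidef_sum _ fun k _ => posSemidef_self_mul_conjTranspose _

lemma trBCmat_applyB_le {M : Matrix (Fin dB) (Fin dB) ℂ}
    (hM : ‖toEuclideanCLM (𝕜 := ℂ) M‖ ≤ 1) (w : Fin dA × Fin dB × Fin dC → ℂ) :
    trBCmat (applyB M w) ≤ trBCmat w := by
  have hMt : Mᵀ * Mᵀᴴ ≤ 1 := by
    rw [le_iff, conjTranspose_transpose_eq_transpose_conjTranspose, ← transpose_mul,
      ← transpose_one, ← transpose_sub]
    exact (conjTranspose_mul_self_le_one hM).transpose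
  rw [trBCmat_eq_sum_sliceC, trBCmat_eq_sum_sliceC]
  refine Finset.sum_le_sum fun k _ => ?_
  simpa only [sliceC_applyB, conjTranspose_mul, Matrix.mul_assoc, Matrix.mul_one] using
    mul_mul_conjTranspose_mono hMt (sliceC w k)

lemma trace_trBCmat (w : Fin dA × Fin dB × Fin dC → ℂ) :
    (trBCmat w).trace = ((∑ x, ‖w x‖ ^ 2 : ℝ) : ℂ) := by
  simp only [trace, diag, trBCmat, of_apply, Complex.mul_conj, Complex.normSq_eq_norm_sq,
    Fintype.sum_prod_type]
  push_cast
  rfl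

lemma trBCmat_smul (c : ℂ) (w : Fin dA × Fin dB × Fin dC → ℂ) :
    trBCmat (fun x => c * w x) = (c * conj c) • trBCmat w := by
  ext i i'
  simp only [trBCmat, of_apply, Matrix.smul_apply, smul_eq_mul, Finset.mul_sum, map_mul]
  exact Finset.sum_congr rfl fun j _ => Finset.sum_congr rfl fun k _ => by ring

lemma norm_toEuclideanCLM_trBCmat_pos {w : Fin dA × Fin dB × Fin dC → ℂ}
    (hw : 0 < ∑ x, ‖w x‖ ^ 2) : 0 < ‖toEuclideanCLM (𝕜 := ℂ) (trBCmat w)‖ := by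
  refine norm_pos_iff.mpr fun h => hw.ne' ?_
  have h0 : trBCmat w = 0 := toEuclideanCLM.injective (h.trans (map_zero _).symm)
  have htr := trace_trBCmat w
  rwa [h0, trace_zero, eq_comm, Complex.ofReal_eq_zero] at htr

lemma minEntropyA_inv_sqrt_mul {p : ℝ} (hp : 0 < p) {w : Fin dA × Fin dB × Fin dC → ℂ}
    (hw : 0 < ∑ x, ‖w x‖ ^ 2) :
    minEntropyA (fun x => (Real.sqrt p : ℂ)⁻¹ * w x) = minEntropyA w + Real.logb 2 p := by
  have hc : (Real.sqrt p : ℂ)⁻¹ * conj (Real.sqrt p : ℂ)⁻¹ = ((p⁻¹ : ℝ) : ℂ) := by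
    rw [map_inv₀, Complex.conj_ofReal, ← mul_inv, ← Complex.ofReal_mul,
      Real.mul_self_sqrt hp.le, Complex.ofReal_inv]
  rw [minEntropyA, minEntropyA, trBCmat_smul, hc, map_smul, norm_smul, Complex.norm_real,
    Real.norm_eq_abs, abs_of_pos (inv_pos.mpr hp), Real.logb_mul (inv_ne_zero hp.ne')
    (norm_toEuclideanCLM_trBCmat_pos hw).ne', Real.logb_inv]
  ring

lemma minEntropyA_le_applyB {M : Matrix (Fin dB) (Fin dB) ℂ}
    (hM : ‖toEuclideanCLM (𝕜 := ℂ) M‖ ≤ 1) {w : Fin dA × Fin dB × Fin dC → ℂ}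
    (hw : 0 < ∑ x, ‖applyB M w x‖ ^ 2) : minEntropyA w ≤ minEntropyA (applyB M w) :=
  neg_le_neg <| Real.logb_le_logb_of_le one_lt_two (norm_toEuclideanCLM_trBCmat_pos hw)
    (norm_toEuclideanCLM_le_of_le (posSemidef_trBCmat _) (trBCmat_applyB_le hM w))

theorem minEntropy_simultaneous_truncation_general {dA dB dC : ℕ}
    (ψ : Fin dA × Fin dB × Fin dC → ℂ)
    (MA : Matrix (Fin dA) (Fin dA) ℂ) (MB : Matrix (Fin dB) (Fin dB) ℂ)
    (hMB : ‖Matrix.toEuclideanCLM (𝕜 := ℂ) MB‖ ≤ 1)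
    (pA pAB : ℝ)
    (hpA : pA = ∑ x, ‖applyA MA ψ x‖ ^ 2)
    (hpAB : pAB = ∑ x, ‖applyA MA (applyB MB ψ) x‖ ^ 2)
    (hpApos : 0 < pA) (hpABpos : 0 < pAB) :
    minEntropyA (fun x => (Real.sqrt pA : ℂ)⁻¹ * applyA MA ψ x) -
        Real.logb 2 (pA / pAB) ≤
      minEntropyA (fun x => (Real.sqrt pAB : ℂ)⁻¹ * applyA MA (applyB MB ψ) x) := by
  rw [applyA_applyB_comm] at hpAB ⊢
  have hmono := minEntropyA_le_applyB hMB (hpAB ▸ hpABpos)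
  rw [minEntropyA_inv_sqrt_mul hpApos (hpA ▸ hpApos),
    minEntropyA_inv_sqrt_mul hpABpos (hpAB ▸ hpABpos), Real.logb_div hpApos.ne' hpABpos.ne']
  linarith

/-- For a unit tripartite vector `ψ` and contractions `M_A`, `M_B` with both outcome
probabilities positive, the min-entropy of the `A`-marginal of the doubly truncated normalized
state is at least that of the singly (`A`-)truncated normalized state minus
`log₂(p_A / p_AB)`. -/
theorem minEntropy_simultaneous_truncation {dA dB dC : ℕ}
    (ψ : Fin dA × Fin dB × Fin dC → ℂ) (hunit : ∑ x, ‖ψ x‖ ^ 2 = 1)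
    (MA : Matrix (Fin dA) (Fin dA) ℂ) (MB : Matrix (Fin dB) (Fin dB) ℂ)
    (hMA : ‖Matrix.toEuclideanCLM (𝕜 := ℂ) MA‖ ≤ 1)
    (hMB : ‖Matrix.toEuclideanCLM (𝕜 := ℂ) MB‖ ≤ 1)
    (pA pAB : ℝ)
    (hpA : pA = ∑ x, ‖applyA MA ψ x‖ ^ 2)
    (hpAB : pAB = ∑ x, ‖applyA MA (applyB MB ψ) x‖ ^ 2)
    (hpApos : 0 < pA) (hpABpos : 0 < pAB) :
    minEntropyA (fun x => (Real.sqrt pA : ℂ)⁻¹ * applyA MA ψ x) -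
        Real.logb 2 (pA / pAB) ≤
      minEntropyA (fun x => (Real.sqrt pAB : ℂ)⁻¹ * applyA MA (applyB MB ψ) x) :=
  minEntropy_simultaneous_truncation_general ψ MA MB hMB pA pAB hpA hpAB hpApos hpABpos
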